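/- Let A be a compact metrizable abelian group with shift-invariant metric and μ a strictly aperiodic Borel probability measure on A. Then for every ε > 0 there exist m₀ ∈ ℕ and finitely many elements of the form s_k = Σ_{j=1}^{m₀}(α_j^{(k)} − β_j^{(k)}) with all α_j^{(k)}, β_j^{(k)} ∈ supp(μ), k = 1, …, N, forming an ε-net in A, and setting β = Σ_{k=1}^N Σ_{j=1}^{m₀} β_j^{(k)}, each point s_k + β lies in supp(μ^{*(m₀N)}); consequently supp(μ^{*(m₀N)}) is ε-dense in A. -/

import Mathlib

open MeasureTheory Topology Filter Pointwise

noncomputable def wass {X : Type*} [MeasurableSpace X] [PseudoMetricSpace X]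
    (ν₁ ν₂ : Measure X) : ℝ :=
  sInf {r | ∃ γ : Measure (X × X), IsProbabilityMeasure γ ∧
    γ.map Prod.fst = ν₁ ∧ γ.map Prod.snd = ν₂ ∧ r = ∫ p, dist p.1 p.2 ∂γ}

def msupp {X : Type*} [TopologicalSpace X] [MeasurableSpace X] (μ : Measure X) : Set X :=
  {x | ∀ U : Set X, x ∈ U → IsOpen U → 0 < μ U}

noncomputable def mconv {A : Type*} [MeasurableSpace A] [Add A] (μ ν : Measure A) : Measure A :=
  (μ.prod ν).map (fun p => p.1 + p.2)

noncomputable def mconvPow {A : Type*} [MeasurableSpace A] [AddMonoid A]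
    (μ : Measure A) : ℕ → Measure A
  | 0 => Measure.dirac 0
  | n + 1 => mconv μ (mconvPow μ n)

noncomputable def mconvProd {A : Type*} [MeasurableSpace A] [AddMonoid A] :
    List (Measure A) → Measure A
  | [] => Measure.dirac 0
  | μ :: l => mconv μ (mconvProd l)

def StrictlyAperiodic {A : Type*} [MeasurableSpace A] [TopologicalSpace A] [AddGroup A]
    (μ : Measure A) : Prop :=
  closure (AddSubsemigroup.closure
    {x : A | ∃ a ∈ msupp μ, ∃ b ∈ msupp μ, x = a - b} : Set A) = Set.univ

open scoped NNReal ENNReal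


section Aux

variable {A : Type*} [MeasurableSpace A] [MetricSpace A] [AddCommGroup A]
    [IsTopologicalAddGroup A] [CompactSpace A] [BorelSpace A]

lemma msupp_nonempty (μ : Measure A) [IsProbabilityMeasure μ] : (msupp μ).Nonempty := by
  by_contra h
  rw [Set.not_nonempty_iff_eq_empty] at h
  have h' : ∀ x : A, ∃ U : Set A, x ∈ U ∧ IsOpen U ∧ μ U = 0 := by
    intro x
    have : x ∉ msupp μ := by simp [h]
    simp only [msupp, Set.mem_setOf_eq, not_forall] at this
    obtain ⟨U, hxU, hUo, hU⟩ := this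
    exact ⟨U, hxU, hUo, by simpa using hU⟩
  choose U hxU hUo hU0 using h'
  obtain ⟨t, ht⟩ := isCompact_univ.elim_finite_subcover U hUo
    (fun x _ => Set.mem_iUnion.2 ⟨x, hxU x⟩)
  have : μ Set.univ ≤ 0 := by
    calc μ Set.univ ≤ μ (⋃ x ∈ t, U x) := measure_mono ht
    _ ≤ ∑ x ∈ t, μ (U x) := measure_biUnion_finset_le t U
    _ = 0 := by simp [hU0]
  simp [measure_univ] at this

lemma measurable_add2 : Measurable (fun p : A × A => p.1 + p.2) :=
  continuous_add.measurable

lemma mconvPow_prob (μ : Measure A) [IsProbabilityMeasure μ] (n : ℕ) :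
    IsProbabilityMeasure (mconvPow μ n) := by
  induction n with
  | zero => exact ⟨by simp [mconvPow]⟩
  | succ n ih =>
    haveI := ih
    exact Measure.isProbabilityMeasure_map (measurable_add2.aemeasurable)

lemma add_mem_msupp {μ ν : Measure A} [IsProbabilityMeasure μ] [IsProbabilityMeasure ν]
    {x y : A} (hx : x ∈ msupp μ) (hy : y ∈ msupp ν) : x + y ∈ msupp (mconv μ ν) := by
  intro U hU hUo
  rw [mconv, Measure.map_apply measurable_add2 hUo.measurableSet]
  have hpre : IsOpen ((fun p : A × A => p.1 + p.2) ⁻¹' U) := hUo.preimage continuous_add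
  obtain ⟨V, W, hV, hW, hxV, hyW, hVW⟩ := isOpen_prod_iff.1 hpre x y hU
  calc (0 : ℝ≥0∞) < μ V * ν W :=
        ENNReal.mul_pos (hx V hxV hV).ne' (hy W hyW hW).ne'
  _ = (μ.prod ν) (V ×ˢ W) := (Measure.prod_prod V W).symm
  _ ≤ (μ.prod ν) ((fun p : A × A => p.1 + p.2) ⁻¹' U) := measure_mono hVW

lemma sum_mem_msupp (μ : Measure A) [IsProbabilityMeasure μ] :
    ∀ n (f : Fin n → A), (∀ i, f i ∈ msupp μ) → (∑ i, f i) ∈ msupp (mconvPow μ n) := by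
  intro n
  induction n with
  | zero =>
    intro f _ U hU hUo
    rw [show mconvPow μ 0 = Measure.dirac (0 : A) from rfl,
      Measure.dirac_apply' _ hUo.measurableSet]
    simp only [Finset.univ_eq_empty, Finset.sum_empty] at hU
    simp [Set.indicator_of_mem hU]
  | succ n ih =>
    intro f hf
    haveI := mconvPow_prob μ n
    rw [Fin.sum_univ_succ]
    exact add_mem_msupp (hf 0) (ih _ fun i => hf i.succ)

lemma rep_of_mem_closure (μ : Measure A) {x : A}
    (hx : x ∈ AddSubsemigroup.closure {x : A | ∃ a ∈ msupp μ, ∃ b ∈ msupp μ, x = a - b}) :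
    ∃ n, 0 < n ∧ ∃ f g : ℕ → A, (∀ j, f j ∈ msupp μ) ∧ (∀ j, g j ∈ msupp μ) ∧
      x = ∑ j ∈ Finset.range n, (f j - g j) := by
  induction hx using AddSubsemigroup.closure_induction with
  | mem z hz =>
    obtain ⟨a, ha, b, hb, rfl⟩ := hz
    exact ⟨1, one_pos, fun _ => a, fun _ => b, fun _ => ha, fun _ => hb, by simp⟩
  | add z w hz hw ihz ihw =>
    obtain ⟨n₁, hn₁, f₁, g₁, hf₁, hg₁, h₁⟩ := ihz
    obtain ⟨n₂, hn₂, f₂, g₂, hf₂, hg₂, h₂⟩ := ihw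
    refine ⟨n₁ + n₂, by omega,
      fun j => if j < n₁ then f₁ j else f₂ (j - n₁),
      fun j => if j < n₁ then g₁ j else g₂ (j - n₁),
      fun j => by dsimp only; split <;> [exact hf₁ j; exact hf₂ _],
      fun j => by dsimp only; split <;> [exact hg₁ j; exact hg₂ _], ?_⟩
    rw [← Finset.sum_range_add_sum_Ico _ (Nat.le_add_right n₁ n₂)]
    have e1 : ∑ j ∈ Finset.range n₁,
        ((if j < n₁ then f₁ j else f₂ (j - n₁)) - (if j < n₁ then g₁ j else g₂ (j - n₁)))
        = ∑ j ∈ Finset.range n₁, (f₁ j - g₁ j) := by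
      refine Finset.sum_congr rfl fun j hj => ?_
      rw [Finset.mem_range] at hj
      simp [hj]
    have e2 : ∑ j ∈ Finset.Ico n₁ (n₁ + n₂),
        ((if j < n₁ then f₁ j else f₂ (j - n₁)) - (if j < n₁ then g₁ j else g₂ (j - n₁)))
        = ∑ j ∈ Finset.range n₂, (f₂ j - g₂ j) := by
      rw [Finset.sum_Ico_eq_sum_range]
      refine Finset.sum_congr (by congr 1; omega) fun j hj => ?_
      have : ¬ (n₁ + j < n₁) := by omega
      simp [this]
    rw [e1, e2, ← h₁, ← h₂]

end Aux

theorem stmt18 {A : Type*} [MeasurableSpace A] [MetricSpace A] [AddCommGroup A]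
    [IsTopologicalAddGroup A] [CompactSpace A] [BorelSpace A]
    (hd : ∀ a x y : A, dist (x + a) (y + a) = dist x y)
    (μ : Measure A) [IsProbabilityMeasure μ] (hap : StrictlyAperiodic μ)
    (ε : ℝ) (hε : 0 < ε) :
    ∃ (m₀ N : ℕ) (a b : Fin N → Fin m₀ → A),
      (∀ k j, a k j ∈ msupp μ) ∧ (∀ k j, b k j ∈ msupp μ) ∧
      (∀ x : A, ∃ k, dist x (∑ j, (a k j - b k j)) ≤ ε) ∧
      (∀ k, (∑ j, (a k j - b k j)) + (∑ k', ∑ j, b k' j) ∈ msupp (mconvPow μ (m₀ * N))) ∧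
      (∀ x : A, ∃ y ∈ msupp (mconvPow μ (m₀ * N)), dist x y ≤ ε) := by
  obtain ⟨a₀, ha₀⟩ := msupp_nonempty μ
  -- a finite ε/2-net of centers
  obtain ⟨t, htf, htcov⟩ := Metric.totallyBounded_iff.1
    (isCompact_univ : IsCompact (Set.univ : Set A)).totallyBounded (ε / 2) (half_pos hε)
  set T : Finset A := htf.toFinset with hT
  set N : ℕ := T.card with hN
  set e : Fin N → A := fun k => (T.equivFin.symm k : A) with he
  -- for each center, an element of the semigroup within ε/2
  have hclose : ∀ k : Fin N, ∃ s ∈ (AddSubsemigroup.closure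
      {x : A | ∃ a ∈ msupp μ, ∃ b ∈ msupp μ, x = a - b} : Set A),
      dist (e k) s < ε / 2 := by
    intro k
    have hmem : e k ∈ closure (AddSubsemigroup.closure
        {x : A | ∃ a ∈ msupp μ, ∃ b ∈ msupp μ, x = a - b} : Set A) := by
      rw [hap]; trivial
    exact Metric.mem_closure_iff.1 hmem (ε / 2) (half_pos hε)
  choose sel hselS hseld using hclose
  choose n hn f g hf hg hsum using fun k => rep_of_mem_closure μ (hselS k)
  set m₀ : ℕ := Finset.univ.sup n with hm₀
  have hnle : ∀ k, n k ≤ m₀ := fun k => Finset.le_sup (Finset.mem_univ k)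
  set aa : Fin N → Fin m₀ → A := fun k j => if (j : ℕ) < n k then f k j else a₀ with haa
  set bb : Fin N → Fin m₀ → A := fun k j => if (j : ℕ) < n k then g k j else a₀ with hbb
  have haam : ∀ k j, aa k j ∈ msupp μ := by
    intro k j; rw [haa]; dsimp only; split <;> [exact hf k j; exact ha₀]
  have hbbm : ∀ k j, bb k j ∈ msupp μ := by
    intro k j; rw [hbb]; dsimp only; split <;> [exact hg k j; exact ha₀]
  -- the key sum identity
  have hsk : ∀ k, (∑ j, (aa k j - bb k j)) = sel k := by
    intro k
    rw [haa, hbb]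
    rw [Fin.sum_univ_eq_sum_range
      (fun j => (if j < n k then f k j else a₀) - (if j < n k then g k j else a₀)) m₀]
    have h1 : ∀ j, ((if j < n k then f k j else a₀) - (if j < n k then g k j else a₀))
        = if j < n k then f k j - g k j else 0 := by
      intro j; split <;> simp
    calc ∑ j ∈ Finset.range m₀,
          ((if j < n k then f k j else a₀) - (if j < n k then g k j else a₀))
        = ∑ j ∈ Finset.range m₀, (if j < n k then f k j - g k j else 0) :=
          Finset.sum_congr rfl fun j _ => h1 j
      _ = ∑ j ∈ (Finset.range m₀).filter (· < n k), (f k j - g k j) :=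
          (Finset.sum_filter _ _).symm
      _ = ∑ j ∈ Finset.range (n k), (f k j - g k j) := by
          congr 1
          ext j
          simp only [Finset.mem_filter, Finset.mem_range]
          have := hnle k
          omega
      _ = sel k := (hsum k).symm
  -- the ε-net property
  have hnet : ∀ x : A, ∃ k, dist x (sel k) ≤ ε := by
    intro x
    have hx := htcov (Set.mem_univ x)
    simp only [Set.mem_iUnion] at hx
    obtain ⟨c, hct, hxc⟩ := hx
    refine ⟨T.equivFin ⟨c, htf.mem_toFinset.2 hct⟩, ?_⟩
    have hec : e (T.equivFin ⟨c, htf.mem_toFinset.2 hct⟩) = c := by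
      rw [he]; simp
    have h1 : dist x c < ε / 2 := Metric.mem_ball.1 hxc
    have h2 := hseld (T.equivFin ⟨c, htf.mem_toFinset.2 hct⟩)
    rw [hec] at h2
    calc dist x (sel (T.equivFin ⟨c, htf.mem_toFinset.2 hct⟩))
        ≤ dist x c + dist c (sel (T.equivFin ⟨c, htf.mem_toFinset.2 hct⟩)) :=
          dist_triangle _ _ _
      _ ≤ ε := by linarith
  -- membership of shifted net points in the support of the convolution power
  have hmem4 : ∀ k, (∑ j, (aa k j - bb k j)) + (∑ k', ∑ j, bb k' j)
      ∈ msupp (mconvPow μ (m₀ * N)) := by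
    intro k
    set c : Fin N → Fin m₀ → A := fun k' j => if k' = k then aa k j else bb k' j with hc
    have hcm : ∀ k' j, c k' j ∈ msupp μ := by
      intro k' j; rw [hc]; dsimp only; split <;> [exact haam k j; exact hbbm k' j]
    have hsum' := sum_mem_msupp μ (m₀ * N)
      (fun i => (fun p : Fin m₀ × Fin N => c p.2 p.1) (finProdFinEquiv.symm i))
      (fun i => hcm _ _)
    have h1 : ∑ i : Fin (m₀ * N),
        (fun p : Fin m₀ × Fin N => c p.2 p.1) (finProdFinEquiv.symm i)
        = ∑ p : Fin m₀ × Fin N, c p.2 p.1 :=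
      Equiv.sum_comp finProdFinEquiv.symm (fun p : Fin m₀ × Fin N => c p.2 p.1)
    have h2 : ∑ p : Fin m₀ × Fin N, c p.2 p.1 = ∑ k', ∑ j, c k' j := by
      rw [Fintype.sum_prod_type]; exact Finset.sum_comm
    rw [h1, h2] at hsum'
    have heq : (∑ j, (aa k j - bb k j)) + (∑ k', ∑ j, bb k' j)
        = ∑ k', ∑ j, c k' j := by
      have hpt : ∀ (k' : Fin N) (j : Fin m₀),
          c k' j = bb k' j + (if k' = k then aa k j - bb k j else 0) := by
        intro k' j; rw [hc]; dsimp only; split_ifs with h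
        · subst h; abel
        · simp
      simp_rw [hpt, Finset.sum_add_distrib]
      have h3 : ∀ k' : Fin N,
          (∑ j, (if k' = k then aa k j - bb k j else 0)) =
          if k' = k then ∑ j, (aa k j - bb k j) else 0 := by
        intro k'; split_ifs <;> simp
      simp_rw [h3]
      rw [Finset.sum_ite_eq' Finset.univ k]
      simp only [Finset.mem_univ, if_true]
      abel
    rw [heq]
    exact hsum'
  refine ⟨m₀, N, aa, bb, haam, hbbm, ?_, hmem4, ?_⟩
  · intro x
    obtain ⟨k, hk⟩ := hnet x
    exact ⟨k, by rw [hsk]; exact hk⟩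
  · intro x
    set β : A := ∑ k', ∑ j, bb k' j with hβ
    obtain ⟨k, hk⟩ := hnet (x - β)
    refine ⟨sel k + β, ?_, ?_⟩
    · have := hmem4 k
      rwa [hsk] at this
    · have := hd β (x - β) (sel k)
      rw [sub_add_cancel] at this
      rw [this]
      exact hk
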